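/- For every integer n ≥ 0, every real x > 0, and all reals ε > 0, ε_s > 0, the quadratic f_n satisfies f_n(1) = n·ε·ε_s/x². -/

import Mathlib

/-!
With the reverse Bessel polynomials `θ_n(x) = ∑ₗ (n+l)! / (l! (n-l)! 2^l) x^(n-l)` one has
`k_n(x) = e^{-x} θ_n(x) / x^(n+1)` and `x^(n+1) i_n(x) = (-1)^n (e^x θ_n(-x) - e^{-x} θ_n(x)) / 2`.
Once `i_n(x)` and `k_n(x)` are known to be nonzero, clearing the denominators of `ϝ_n` shows
`f_n(1) = n ε ε_s x² W²` with `W = i_n k_{n+1} + i_{n+1} k_n`. The three-term recurrence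
`θ_{n+2} = (2n+3) θ_{n+1} + x² θ_n` gives the polynomial Wronskian
`θ_n(-x) θ_{n+1}(x) - θ_{n+1}(-x) θ_n(x) = 2 (-1)^n x^(2n+1)`, whence `W = 1/x²`.
Positivity of `i_n` follows by induction on `n`: the identity `θ_{n+1} - θ_{n+1}' = x θ_n` makes
the derivative of `x^(n+2) i_{n+1}(x)` equal to `x · x^(n+1) i_n(x)`, and both vanish at `0`.
-/

open Real Finset

/-- Modified spherical Bessel function of the second kind `k_n`, explicit closed form. -/
noncomputable def kBes (n : ℕ) (x : ℝ) : ℝ :=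
  (Real.exp (-x) / x) *
    ∑ l ∈ Finset.range (n + 1),
      (Nat.factorial (n + l) : ℝ) /
        ((Nat.factorial l : ℝ) * (Nat.factorial (n - l) : ℝ) * (2 * x) ^ l)

/-- Modified spherical Bessel function of the first kind `i_n`, explicit closed form. -/
noncomputable def iBes (n : ℕ) (x : ℝ) : ℝ :=
  (1 / (2 * x)) *
    (Real.exp x *
        ∑ l ∈ Finset.range (n + 1),
          (-1 : ℝ) ^ l * (Nat.factorial (n + l) : ℝ) /
            ((Nat.factorial l : ℝ) * (Nat.factorial (n - l) : ℝ) * (2 * x) ^ l)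
      + (-1 : ℝ) ^ (n + 1) * Real.exp (-x) *
        ∑ l ∈ Finset.range (n + 1),
          (Nat.factorial (n + l) : ℝ) /
            ((Nat.factorial l : ℝ) * (Nat.factorial (n - l) : ℝ) * (2 * x) ^ l))

/-- The quadratic `f_n(λ)` from the spectral-radius proof. -/
noncomputable def fquad (n : ℕ) (x eps epss lam : ℝ) : ℝ :=
  let A : ℝ := (n : ℝ) * (eps - epss) * iBes n x - x * epss * iBes (n + 1) x
  let B : ℝ := (n : ℝ) * (eps - epss) * kBes n x + x * epss * kBes (n + 1) x
  let C : ℝ := (n : ℝ) * iBes n x + x * iBes (n + 1) x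
  let D : ℝ := (n : ℝ) * kBes n x - x * kBes (n + 1) x
  let F : ℝ := 2 * (n : ℝ) / x + iBes (n + 1) x / iBes n x - kBes (n + 1) x / kBes n x
  A ^ 2 * D * kBes n x * lam ^ 2 - A * B * x * iBes n x * kBes n x * F * lam
    + B ^ 2 * C * iBes n x

open scoped Nat
open Polynomial

/-- `(n+l)! / (l! (n-l)! 2^l)`, written so that it is visibly a natural number and vanishes for
`l > n`; at `l = 0` the truncated `(2 * 0 - 1)‼` is `0‼ = 1`. -/
def besselCoeff (n l : ℕ) : ℕ := (n + l).choose (2 * l) * (2 * l - 1)‼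

lemma besselCoeff_zero_right (n : ℕ) : besselCoeff n 0 = 1 := by simp [besselCoeff]

lemma besselCoeff_eq_zero_of_lt {n l : ℕ} (h : n < l) : besselCoeff n l = 0 := by
  simp [besselCoeff, Nat.choose_eq_zero_of_lt (by omega : n + l < 2 * l)]

lemma Nat.factorial_two_mul (l : ℕ) : (2 * l)! = 2 ^ l * l ! * (2 * l - 1)‼ := by
  rcases l with _ | l
  · rfl
  · rw [show 2 * (l + 1) - 1 = 2 * l + 1 by omega, ← Nat.doubleFactorial_two_mul,
      show 2 * (l + 1) = 2 * l + 1 + 1 by ring, Nat.factorial_eq_mul_doubleFactorial]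

lemma besselCoeff_mul_eq_factorial {n l : ℕ} (h : l ≤ n) :
    besselCoeff n l * (l ! * (n - l)! * 2 ^ l) = (n + l)! := by
  rw [← Nat.choose_mul_factorial_mul_factorial (by omega : 2 * l ≤ n + l), Nat.factorial_two_mul,
    show n + l - 2 * l = n - l by omega, besselCoeff]
  ring

lemma besselCoeff_add_two_succ (n l : ℕ) :
    besselCoeff (n + 2) (l + 1) = (2 * n + 3) * besselCoeff (n + 1) l + besselCoeff n (l + 1) := by
  set N := n + l + 1
  have hpascal : (N + 2).choose (2 * l + 2) =
      N.choose (2 * l) + 2 * N.choose (2 * l + 1) + N.choose (2 * l + 2) := by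
    rw [Nat.choose_succ_succ' (N + 1), Nat.choose_succ_succ' N, Nat.choose_succ_succ' N]
    ring
  have hkey : (N.choose (2 * l) + 2 * N.choose (2 * l + 1)) * (2 * l + 1) =
      (2 * n + 3) * N.choose (2 * l) := by
    have hshift := Nat.choose_succ_right_eq N (2 * l)
    rcases le_or_gt (2 * l) N with hle | hlt
    · obtain ⟨k, hk⟩ := Nat.exists_eq_add_of_le hle
      rw [hk, Nat.add_sub_cancel_left, ← hk] at hshift
      rw [show 2 * n + 3 = 2 * l + 1 + 2 * k by omega]
      linear_combination 2 * hshift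
    · simp [Nat.choose_eq_zero_of_lt hlt, Nat.choose_eq_zero_of_lt (by omega : N < 2 * l + 1)]
  have hodd : (2 * (l + 1) - 1)‼ = (2 * l + 1) * (2 * l - 1)‼ := Nat.doubleFactorial_add_one (2 * l)
  rw [besselCoeff, besselCoeff, besselCoeff, hodd, show n + 2 + (l + 1) = N + 2 by omega,
    show n + 1 + l = N by omega, show n + (l + 1) = N by omega, show 2 * (l + 1) = 2 * l + 2 by ring,
    hpascal]
  linear_combination (2 * l - 1)‼ * hkey

noncomputable def revBessel (n : ℕ) : ℝ[X] :=
  ∑ l ∈ range (n + 1), (besselCoeff n l : ℝ[X]) * X ^ (n - l)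

lemma revBessel_zero : revBessel 0 = 1 := by
  simp [revBessel, besselCoeff_zero_right]

lemma revBessel_one : revBessel 1 = X + 1 := by
  simp [revBessel, sum_range_succ, besselCoeff]

lemma revBessel_add_two (n : ℕ) :
    revBessel (n + 2) = (2 * (n : ℝ[X]) + 3) * revBessel (n + 1) + X ^ 2 * revBessel n := by
  have hlow : X ^ 2 * revBessel n =
      X ^ (n + 2) + ∑ l ∈ range (n + 2), (besselCoeff n (l + 1) : ℝ[X]) * X ^ (n + 1 - l) := by
    rw [sum_range_succ, sum_range_succ, besselCoeff_eq_zero_of_lt (by omega),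
      besselCoeff_eq_zero_of_lt (by omega), revBessel, sum_range_succ', mul_add, mul_sum]
    simp only [besselCoeff_zero_right, Nat.cast_zero, Nat.cast_one, zero_mul, add_zero, one_mul,
      Nat.sub_zero]
    rw [add_comm, ← pow_add, add_comm 2 n]
    congr 1
    refine sum_congr rfl fun l hl => ?_
    rw [mul_left_comm, ← pow_add]
    congr 2
    have := mem_range.mp hl
    omega
  have hterm : ∀ l, (besselCoeff (n + 2) (l + 1) : ℝ[X]) * X ^ (n + 2 - (l + 1)) =
      (2 * (n : ℝ[X]) + 3) * ((besselCoeff (n + 1) l : ℝ[X]) * X ^ (n + 1 - l)) +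
        (besselCoeff n (l + 1) : ℝ[X]) * X ^ (n + 1 - l) := by
    intro l
    rw [besselCoeff_add_two_succ, show n + 2 - (l + 1) = n + 1 - l by omega]
    push_cast
    ring
  rw [hlow, revBessel, revBessel, sum_range_succ', sum_congr rfl fun l _ => hterm l,
    sum_add_distrib, ← mul_sum, besselCoeff_zero_right]
  simp only [Nat.cast_one, one_mul, Nat.sub_zero]
  ring

lemma derivative_revBessel_add_two (n : ℕ) :
    derivative (revBessel (n + 2)) = (2 * (n : ℝ[X]) + 3) * derivative (revBessel (n + 1))
      + 2 * X * revBessel n + X ^ 2 * derivative (revBessel n) := by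
  rw [revBessel_add_two]
  simp only [derivative_add, derivative_mul, derivative_natCast, derivative_ofNat, derivative_sq,
    derivative_X, map_ofNat]
  ring

lemma revBessel_sub_derivative (n : ℕ) :
    revBessel (n + 1) - derivative (revBessel (n + 1)) = X * revBessel n := by
  induction n using Nat.twoStepInduction with
  | zero => simp [revBessel_zero, revBessel_one]
  | one =>
    rw [derivative_revBessel_add_two, revBessel_add_two, revBessel_one, revBessel_zero]
    simp only [derivative_add, derivative_X, derivative_one]
    ring
  | more n ih₀ ih₁ =>
    rw [derivative_revBessel_add_two (n + 1), revBessel_add_two (n + 1)]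
    push_cast
    linear_combination (2 * (n : ℝ[X]) + 5) * ih₁ + X ^ 2 * ih₀ - X * revBessel_add_two n

lemma revBessel_eval_pos (n : ℕ) {x : ℝ} (hx : 0 < x) : 0 < (revBessel n).eval x := by
  rw [revBessel, eval_finsetSum, sum_range_succ']
  refine add_pos_of_nonneg_of_pos (sum_nonneg fun l _ => ?_) ?_
  · simp only [eval_mul, eval_natCast, eval_pow, eval_X]
    positivity
  · simp [besselCoeff_zero_right, hx]

lemma revBessel_wronskian (n : ℕ) (x : ℝ) :
    (revBessel n).eval (-x) * (revBessel (n + 1)).eval x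
      - (revBessel (n + 1)).eval (-x) * (revBessel n).eval x = 2 * (-1) ^ n * x ^ (2 * n + 1) := by
  induction n with
  | zero =>
    simp only [zero_add, revBessel_zero, revBessel_one, eval_one, eval_add, eval_X]
    ring
  | succ n ih =>
    simp only [revBessel_add_two, eval_add, eval_mul, eval_pow, eval_X, eval_natCast, eval_ofNat]
    linear_combination (-x ^ 2) * ih

lemma sum_factorial_div_eq_revBessel (n : ℕ) {y : ℝ} (hy : y ≠ 0) :
    ∑ l ∈ range (n + 1), ((n + l)! : ℝ) / (l ! * (n - l)! * (2 * y) ^ l)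
      = (revBessel n).eval y / y ^ n := by
  rw [revBessel, eval_finsetSum, sum_div]
  refine sum_congr rfl fun l hl => ?_
  have hl : l ≤ n := Nat.lt_succ_iff.mp (mem_range.mp hl)
  rw [← besselCoeff_mul_eq_factorial hl, ← Nat.sub_add_cancel hl]
  simp only [eval_mul, eval_natCast, eval_pow, eval_X, Nat.add_sub_cancel]
  push_cast
  field_simp
  ring

lemma kBes_eq (n : ℕ) {x : ℝ} (hx : x ≠ 0) :
    kBes n x = exp (-x) * (revBessel n).eval x / x ^ (n + 1) := by
  rw [kBes, sum_factorial_div_eq_revBessel n hx]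
  field_simp
  ring

noncomputable def iBesNum (n : ℕ) (x : ℝ) : ℝ :=
  ((-1) ^ n * exp x * (revBessel n).eval (-x) + (-1) ^ (n + 1) * exp (-x) * (revBessel n).eval x) / 2

lemma iBes_eq (n : ℕ) {x : ℝ} (hx : x ≠ 0) : iBes n x = iBesNum n x / x ^ (n + 1) := by
  have halt : ∑ l ∈ range (n + 1), (-1 : ℝ) ^ l * (n + l)! / (l ! * (n - l)! * (2 * x) ^ l)
      = ∑ l ∈ range (n + 1), ((n + l)! : ℝ) / (l ! * (n - l)! * (2 * -x) ^ l) := by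
    refine sum_congr rfl fun l _ => ?_
    rw [mul_neg, neg_pow (2 * x)]
    rcases neg_one_pow_eq_or ℝ l with h | h <;> rw [h] <;> ring
  have hneg : (revBessel n).eval (-x) / (-x) ^ n = (-1) ^ n * (revBessel n).eval (-x) / x ^ n := by
    rw [neg_pow x]
    rcases neg_one_pow_eq_or ℝ n with h | h <;> rw [h] <;> ring
  rw [iBes, halt, sum_factorial_div_eq_revBessel n hx,
    sum_factorial_div_eq_revBessel n (neg_ne_zero.mpr hx), hneg, iBesNum]
  field_simp
  ring

lemma hasDerivAt_iBesNum_succ (n : ℕ) (x : ℝ) :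
    HasDerivAt (iBesNum (n + 1)) (x * iBesNum n x) x := by
  have hrec (t : ℝ) : (revBessel (n + 1)).eval t - (derivative (revBessel (n + 1))).eval t
      = t * (revBessel n).eval t := by
    simpa using congrArg (eval t) (revBessel_sub_derivative n)
  have hθneg : HasDerivAt (fun y => (revBessel (n + 1)).eval (-y))
      ((derivative (revBessel (n + 1))).eval (-x) * -1) x :=
    ((revBessel (n + 1)).hasDerivAt (-x)).comp x (hasDerivAt_neg x)
  have hexpneg : HasDerivAt (fun y => exp (-y)) (exp (-x) * -1) x :=
    (hasDerivAt_exp (-x)).comp x (hasDerivAt_neg x)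
  have h := ((((hasDerivAt_exp x).const_mul ((-1 : ℝ) ^ (n + 1))).mul hθneg).add
    ((hexpneg.const_mul ((-1 : ℝ) ^ (n + 1 + 1))).mul ((revBessel (n + 1)).hasDerivAt x))).div_const 2
  refine h.congr_deriv ?_
  rw [iBesNum]
  linear_combination -(-1 : ℝ) ^ n * (exp x * hrec (-x) + exp (-x) * hrec x) / 2

lemma iBesNum_zero_left (x : ℝ) : iBesNum 0 x = sinh x := by
  simp only [iBesNum, revBessel_zero, eval_one, sinh_eq]
  ring

lemma iBesNum_zero_right (n : ℕ) : iBesNum n 0 = 0 := by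
  simp [iBesNum, pow_succ]

lemma iBesNum_pos (n : ℕ) {x : ℝ} (hx : 0 < x) : 0 < iBesNum n x := by
  induction n generalizing x with
  | zero => rwa [iBesNum_zero_left, sinh_pos_iff]
  | succ n ih =>
    have hmono : StrictMonoOn (iBesNum (n + 1)) (Set.Ici 0) := by
      refine strictMonoOn_of_deriv_pos (convex_Ici 0)
        (fun y _ => (hasDerivAt_iBesNum_succ n y).continuousAt.continuousWithinAt) fun y hy => ?_
      rw [interior_Ici, Set.mem_Ioi] at hy
      rw [(hasDerivAt_iBesNum_succ n y).deriv]
      exact mul_pos hy (ih hy)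
    simpa [iBesNum_zero_right] using hmono Set.self_mem_Ici hx.le hx

lemma iBes_pos (n : ℕ) {x : ℝ} (hx : 0 < x) : 0 < iBes n x := by
  rw [iBes_eq n hx.ne']
  exact div_pos (iBesNum_pos n hx) (pow_pos hx _)

lemma kBes_pos (n : ℕ) {x : ℝ} (hx : 0 < x) : 0 < kBes n x := by
  rw [kBes_eq n hx.ne']
  exact div_pos (mul_pos (exp_pos _) (revBessel_eval_pos n hx)) (pow_pos hx _)

lemma iBesNum_mul_revBessel_succ_add (n : ℕ) (x : ℝ) :
    iBesNum n x * (revBessel (n + 1)).eval x + iBesNum (n + 1) x * (revBessel n).eval x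
      = exp x * x ^ (2 * n + 1) := by
  have hW := revBessel_wronskian n x
  simp only [iBesNum, pow_succ]
  rcases neg_one_pow_eq_or ℝ n with h | h <;> rw [h] at hW ⊢
  · linear_combination exp x / 2 * hW
  · linear_combination -exp x / 2 * hW

lemma iBes_mul_kBes_succ_add_iBes_succ_mul_kBes (n : ℕ) {x : ℝ} (hx : x ≠ 0) :
    iBes n x * kBes (n + 1) x + iBes (n + 1) x * kBes n x = 1 / x ^ 2 := by
  rw [iBes_eq n hx, iBes_eq (n + 1) hx, kBes_eq n hx, kBes_eq (n + 1) hx]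
  calc _ = exp (-x) * (iBesNum n x * (revBessel (n + 1)).eval x
          + iBesNum (n + 1) x * (revBessel n).eval x) / x ^ (2 * n + 3) := by
        field_simp
        ring
    _ = 1 / x ^ 2 := by
        rw [iBesNum_mul_revBessel_succ_add, ← mul_assoc, ← exp_add, neg_add_cancel, exp_zero, one_mul]
        field_simp
        ring

lemma fquad_one_eq {n : ℕ} {x : ℝ} (eps epss : ℝ) (hx : x ≠ 0) (hi : iBes n x ≠ 0)
    (hk : kBes n x ≠ 0) :
    fquad n x eps epss 1 = n * eps * epss * x ^ 2 *
      (iBes n x * kBes (n + 1) x + iBes (n + 1) x * kBes n x) ^ 2 := by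
  simp only [fquad]
  field_simp
  ring

theorem fquad_at_one_general (n : ℕ) (x : ℝ) (hx : 0 < x) (eps epss : ℝ) :
    fquad n x eps epss 1 = (n : ℝ) * eps * epss / x ^ 2 := by
  rw [fquad_one_eq eps epss hx.ne' (iBes_pos n hx).ne' (kBes_pos n hx).ne',
    iBes_mul_kBes_succ_add_iBes_succ_mul_kBes n hx.ne']
  field_simp

/-- For every integer `n ≥ 0`, every real `x > 0`, and all reals `ε > 0`, `ε_s > 0`,
the quadratic `f_n` satisfies `f_n(1) = n·ε·ε_s/x²`. -/
theorem fquad_at_one (n : ℕ) (x : ℝ) (hx : 0 < x) (eps epss : ℝ)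
    (heps : 0 < eps) (hepss : 0 < epss) :
    fquad n x eps epss 1 = (n : ℝ) * eps * epss / x ^ 2 :=
  fquad_at_one_general n x hx eps epss
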